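/- arXiv:1302.1736 — 3 statements merged into one kernel-verified Lean document; each statement's English description precedes it below -/
import Mathlib

section
/- Let B be the unweighted backward shift on l^∞(ℕ) and let λ ∈ ℂ with |λ| > 1. Then for every y ∈ l^∞(ℕ) and every positive integer n there exists w ∈ l^∞(ℕ) such that (I+λB)^n w = y and ‖w‖_∞ ≤ ‖y‖_∞/(|λ|−1)^n. -/
/-!
Since `B` has the forward shift `S` as a right inverse and `‖S‖ ≤ 1`, one has
`(I + λB) λ⁻¹S = I + λ⁻¹S`, and `I + λ⁻¹S` is invertible by a Neumann series with inverse of norm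
at most `(1 - |λ|⁻¹)⁻¹`. Hence `I + λB` has the right inverse `λ⁻¹S (I + λ⁻¹S)⁻¹` of norm at most
`(|λ| - 1)⁻¹`, and `n` applications of it solve `(I + λB)^n w = y`.
-/

open Filter Topology
open scoped ENNReal

noncomputable def backwardShift : lp (fun _ : ℕ => ℂ) ∞ →L[ℂ] lp (fun _ : ℕ => ℂ) ∞ :=
  LinearMap.mkContinuous
    { toFun := fun x => ⟨fun n => x (n + 1), memℓp_infty ⟨‖x‖, by
        rintro r ⟨n, rfl⟩
        exact lp.norm_apply_le_norm ENNReal.top_ne_zero x (n + 1)⟩⟩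
      map_add' := fun x y => by ext n; exact congrFun rfl n
      map_smul' := fun c x => by ext n; rfl }
    1
    (fun x => by
      rw [one_mul]
      apply lp.norm_le_of_forall_le (norm_nonneg x)
      intro n
      exact lp.norm_apply_le_norm ENNReal.top_ne_zero x (n + 1))

section RightInverse

variable {𝕜 E : Type*} [NontriviallyNormedField 𝕜] [NormedAddCommGroup E] [NormedSpace 𝕜 E]

theorem exists_pow_apply_eq_norm_le {A : E →L[𝕜] E} {C : ℝ} (hC : 0 ≤ C)
    (hA : ∀ y, ∃ w, A w = y ∧ ‖w‖ ≤ C * ‖y‖) (n : ℕ) (y : E) :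
    ∃ w, (A ^ n) w = y ∧ ‖w‖ ≤ C ^ n * ‖y‖ := by
  induction n generalizing y with
  | zero => exact ⟨y, rfl, by simp⟩
  | succ n ih =>
    obtain ⟨v, hv, hv_norm⟩ := ih y
    obtain ⟨w, hw, hw_norm⟩ := hA v
    refine ⟨w, by rw [pow_succ, ← hv, ← hw]; rfl, ?_⟩
    calc ‖w‖ ≤ C * ‖v‖ := hw_norm
      _ ≤ C * (C ^ n * ‖y‖) := by gcongr
      _ = C ^ (n + 1) * ‖y‖ := by ring

variable [CompleteSpace E]

theorem exists_add_apply_eq_of_norm_le {T : E →L[𝕜] E} {r : ℝ} (hT : ‖T‖ ≤ r) (hr : r < 1)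
    (y : E) : ∃ u : E, u + T u = y ∧ ‖u‖ ≤ ‖y‖ / (1 - r) := by
  have hT₁ : ‖-T‖ < 1 := by rw [norm_neg]; linarith
  set V := ∑' k : ℕ, (-T) ^ k
  have hV : (1 + T) * V = 1 := by simpa using mul_neg_geom_series (-T) hT₁
  have hV_norm : ‖V‖ ≤ (1 - r)⁻¹ := by
    have h_one : ‖(1 : E →L[𝕜] E)‖ ≤ 1 := ContinuousLinearMap.norm_id_le
    have h_inv : (1 - ‖-T‖)⁻¹ ≤ (1 - r)⁻¹ := by
      rw [norm_neg]
      gcongr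
    linarith [tsum_geometric_le_of_norm_lt_one (-T) hT₁]
  refine ⟨V y, by simpa using congr($hV y), ?_⟩
  calc ‖V y‖ ≤ ‖V‖ * ‖y‖ := V.le_opNorm y
    _ ≤ (1 - r)⁻¹ * ‖y‖ := by gcongr
    _ = ‖y‖ / (1 - r) := by rw [inv_mul_eq_div]

theorem exists_one_add_smul_apply_eq_of_rightInverse {B S : E →L[𝕜] E}
    (hBS : ∀ x, B (S x) = x) (hS : ‖S‖ ≤ 1) {c : 𝕜} (hc : 1 < ‖c‖) (y : E) :
    ∃ w : E, (1 + c • B) w = y ∧ ‖w‖ ≤ ‖y‖ / (‖c‖ - 1) := by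
  have hc₀ : 0 < ‖c‖ := one_pos.trans hc
  have hcS : ‖c⁻¹ • S‖ ≤ ‖c‖⁻¹ :=
    calc ‖c⁻¹ • S‖ ≤ ‖c⁻¹‖ * ‖S‖ := ContinuousLinearMap.opNorm_smul_le _ _
      _ ≤ ‖c‖⁻¹ * 1 := by rw [norm_inv]; gcongr
      _ = ‖c‖⁻¹ := mul_one _
  obtain ⟨u, hu, hu_norm⟩ :=
    exists_add_apply_eq_of_norm_le hcS (inv_lt_one_of_one_lt₀ hc) y
  refine ⟨c⁻¹ • S u, ?_, ?_⟩
  · have hc0 : c ≠ 0 := norm_pos_iff.mp hc₀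
    rw [← hu, add_comm u]
    simp [hBS, smul_smul, inv_mul_cancel₀ hc0]
  · calc ‖c⁻¹ • S u‖ ≤ ‖c‖⁻¹ * ‖u‖ := by
          rw [norm_smul, norm_inv]
          gcongr
          simpa using S.le_of_opNorm_le hS u
      _ ≤ ‖c‖⁻¹ * (‖y‖ / (1 - ‖c‖⁻¹)) := by gcongr
      _ = ‖y‖ / (‖c‖ - 1) := by field_simp

end RightInverse

noncomputable def forwardShift : lp (fun _ : ℕ => ℂ) ∞ →L[ℂ] lp (fun _ : ℕ => ℂ) ∞ :=
  LinearMap.mkContinuous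
    { toFun := fun x => ⟨fun n => Nat.casesOn n 0 (fun k => x k), memℓp_infty ⟨‖x‖, by
        rintro r ⟨n, rfl⟩
        cases n with
        | zero => simp
        | succ k => exact lp.norm_apply_le_norm ENNReal.top_ne_zero x k⟩⟩
      map_add' := fun x y => by
        ext (_ | _)
        · exact (add_zero 0).symm
        · rfl
      map_smul' := fun c x => by
        ext (_ | _)
        · exact (smul_zero c).symm
        · rfl }
    1
    (fun x => by
      rw [one_mul]
      refine lp.norm_le_of_forall_le (norm_nonneg x) fun n => ?_
      cases n with
      | zero => simp
      | succ k => exact lp.norm_apply_le_norm ENNReal.top_ne_zero x k)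

theorem norm_forwardShift_le : ‖forwardShift‖ ≤ 1 :=
  LinearMap.mkContinuous_norm_le _ zero_le_one _

theorem backwardShift_forwardShift (x : lp (fun _ : ℕ => ℂ) ∞) :
    backwardShift (forwardShift x) = x :=
  rfl

theorem stmt5_general (lam : ℂ) (hlam : 1 < ‖lam‖) (y : lp (fun _ : ℕ => ℂ) ∞)
    (n : ℕ) :
    ∃ w : lp (fun _ : ℕ => ℂ) ∞,
      ((1 + lam • backwardShift) ^ n) w = y ∧ ‖w‖ ≤ ‖y‖ / (‖lam‖ - 1) ^ n := by
  have hstep (v : lp (fun _ : ℕ => ℂ) ∞) :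
      ∃ w, (1 + lam • backwardShift) w = v ∧ ‖w‖ ≤ (‖lam‖ - 1)⁻¹ * ‖v‖ := by
    simpa only [inv_mul_eq_div] using exists_one_add_smul_apply_eq_of_rightInverse
      backwardShift_forwardShift norm_forwardShift_le hlam v
  simpa only [inv_pow, inv_mul_eq_div] using
    exists_pow_apply_eq_norm_le (inv_nonneg.mpr (sub_nonneg.mpr hlam.le)) hstep n y

/-- If `|λ| > 1`, then for every `y ∈ l^∞(ℕ)` and every positive integer `n` there is
`w` with `(I + λB)^n w = y` and `‖w‖ ≤ ‖y‖ / (|λ| - 1)^n`. -/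
theorem stmt5 (lam : ℂ) (hlam : 1 < ‖lam‖) (y : lp (fun _ : ℕ => ℂ) ∞)
    (n : ℕ) (hn : 0 < n) :
    ∃ w : lp (fun _ : ℕ => ℂ) ∞,
      ((1 + lam • backwardShift) ^ n) w = y ∧ ‖w‖ ≤ ‖y‖ / (‖lam‖ - 1) ^ n :=
  stmt5_general lam hlam y n
end

section
/- Let B be the unweighted backward shift on l^∞(ℕ) and let λ ∈ ℂ with |λ| = 1. Then the operator I+λB : l^∞(ℕ) → l^∞(ℕ) does not have dense range; in fact, for the vector y = (y_n) with y_n = (−λ)^{−n}, no point of the open ball of radius 1/2 centered at y belongs to the range of I+λB. -/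
open Filter Topology
open scoped ENNReal

/-!
If `w = (I + λB) x`, the bounded sequence `z n = (-λ)^n x n` satisfies `z n - z (n+1) = (-λ)^n w n`,
while `(-λ)^n y n = (-λ)⁻¹` is a constant of modulus one. Telescoping, a bounded sequence whose steps
stay within `ε` of a constant `c` must have `‖c‖ ≤ ε`; hence `‖w - y‖ ≥ 1` for every `w` in the range.
-/

section Telescoping

variable {E : Type*} [SeminormedAddCommGroup E] {z : ℕ → E} {c : E} {ε : ℝ}

theorem norm_sub_sub_nsmul_le_of_norm_sub_sub_le (h : ∀ n, ‖z n - z (n + 1) - c‖ ≤ ε) (N : ℕ) :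
    ‖z 0 - z N - N • c‖ ≤ N * ε := by
  induction N with
  | zero => simp
  | succ N ih =>
    calc ‖z 0 - z (N + 1) - (N + 1) • c‖
        = ‖(z 0 - z N - N • c) + (z N - z (N + 1) - c)‖ := by rw [succ_nsmul]; abel_nf
      _ ≤ N * ε + ε := norm_add_le_of_le ih (h N)
      _ = (N + 1 : ℕ) * ε := by push_cast; ring

theorem norm_le_of_norm_le_of_norm_sub_sub_le [NormedSpace ℝ E] {M : ℝ} (hz : ∀ n, ‖z n‖ ≤ M)
    (h : ∀ n, ‖z n - z (n + 1) - c‖ ≤ ε) : ‖c‖ ≤ ε := by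
  by_contra! hc
  obtain ⟨N, hN⟩ := exists_nat_gt (2 * M / (‖c‖ - ε))
  rw [div_lt_iff₀ (sub_pos.mpr hc)] at hN
  have : (N : ℝ) * ‖c‖ ≤ 2 * M + N * ε :=
    calc (N : ℝ) * ‖c‖ = ‖N • c‖ := by
          rw [← Nat.cast_smul_eq_nsmul ℝ, norm_smul, Real.norm_natCast]
      _ ≤ ‖z 0 - z N‖ + ‖z 0 - z N - N • c‖ := norm_le_norm_add_norm_sub _ _
      _ ≤ (M + M) + N * ε :=
        add_le_add ((norm_sub_le _ _).trans (add_le_add (hz 0) (hz N)))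
          (norm_sub_sub_nsmul_le_of_norm_sub_sub_le h N)
      _ = 2 * M + N * ε := by ring
  linarith

end Telescoping

theorem one_add_smul_backwardShift_apply (lam : ℂ) (x : lp (fun _ : ℕ => ℂ) ∞) (n : ℕ) :
    (1 + lam • backwardShift) x n = x n + lam * x (n + 1) :=
  rfl

theorem memℓp_infty_zpow_of_norm_eq_one {𝕜 : Type*} [NormedDivisionRing 𝕜] {μ : 𝕜} (hμ : ‖μ‖ = 1)
    (f : ℕ → ℤ) : Memℓp (fun n => μ ^ f n) ∞ :=
  memℓp_infty ⟨1, by rintro _ ⟨n, rfl⟩; simp [norm_zpow, hμ]⟩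

theorem one_le_norm_one_add_smul_backwardShift_sub {lam : ℂ} (hlam : ‖lam‖ = 1)
    (x y : lp (fun _ : ℕ => ℂ) ∞) (hy : ∀ n : ℕ, y n = (-lam) ^ (-(n : ℤ) - 1)) :
    1 ≤ ‖(1 + lam • backwardShift) x - y‖ := by
  have hμ : ‖-lam‖ = 1 := by rwa [norm_neg]
  have hμ0 : -lam ≠ 0 := norm_ne_zero_iff.mp (hμ ▸ one_ne_zero)
  set w := (1 + lam • backwardShift) x
  set z : ℕ → ℂ := fun n => (-lam) ^ n * x n
  have hz : ∀ n, ‖z n‖ ≤ ‖x‖ := fun n => by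
    simpa [z, hμ] using lp.norm_apply_le_norm ENNReal.top_ne_zero x n
  have hstep : ∀ n, ‖z n - z (n + 1) - (-lam)⁻¹‖ ≤ ‖w - y‖ := fun n => by
    have : z n - z (n + 1) - (-lam)⁻¹ = (-lam) ^ n * (w - y) n := by
      rw [lp.coeFn_sub, Pi.sub_apply, one_add_smul_backwardShift_apply, hy, zpow_sub₀ hμ0,
        zpow_neg, zpow_natCast, zpow_one]
      field_simp
      ring
    rw [this, norm_mul, norm_pow, hμ, one_pow, one_mul]
    exact lp.norm_apply_le_norm ENNReal.top_ne_zero (w - y) n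
  simpa [hlam] using norm_le_of_norm_le_of_norm_sub_sub_le hz hstep

/-- If `|λ| = 1`, then `I + λB` does not have dense range on `l^∞(ℕ)`; in fact, no
point of the open ball of radius `1/2` around the vector `y = ((-λ)^{-n})_{n ≥ 1}`
belongs to the range of `I + λB`. -/
theorem stmt12 (lam : ℂ) (hlam : ‖lam‖ = 1) :
    ¬ DenseRange ⇑(1 + lam • backwardShift) ∧
    ∃ y : lp (fun _ : ℕ => ℂ) ∞, (∀ n : ℕ, y n = (-lam) ^ (-(n : ℤ) - 1)) ∧
      ∀ w : lp (fun _ : ℕ => ℂ) ∞, ‖w - y‖ < 1 / 2 →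
        w ∉ Set.range ⇑(1 + lam • backwardShift) := by
  set y : lp (fun _ : ℕ => ℂ) ∞ :=
    ⟨_, memℓp_infty_zpow_of_norm_eq_one (norm_neg lam ▸ hlam) fun n => -(n : ℤ) - 1⟩
  have hfar (x) := one_le_norm_one_add_smul_backwardShift_sub hlam x y fun _ => rfl
  refine ⟨fun hdense => ?_, y, fun _ => rfl, ?_⟩
  · obtain ⟨x, hx⟩ := hdense.exists_dist_lt y one_pos
    rw [dist_comm, dist_eq_norm] at hx
    exact (hfar x).not_gt hx
  · rintro _ hw ⟨x, rfl⟩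
    linarith [hfar x]
end

section
/- There exists a bounded linear operator T on l^∞(ℕ) such that T is J^mix-class (i.e. there exists a nonzero x ∈ l^∞(ℕ) with J_T^mix(x) = l^∞(ℕ)) and the set A_T^mix = {x ∈ l^∞(ℕ) : J_T^mix(x) = l^∞(ℕ)} is non-separable. -/
/-
The operator `T x = (2 x(2m+1))ₘ` only reads the odd coordinates. Placing a sequence on the odd
coordinates and halving it gives a right inverse `S` of `T` with `‖S‖ ≤ 1/2`, so for `x ∈ ker T`
the sequence `uₙ = x + Sⁿ y` tends to `x` while `Tⁿ uₙ = y`: every `x` vanishing on the odd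
coordinates has `J_T^mix(x) = ℓ^∞`. The indicators of the sets of even numbers form an uncountable
family of such vectors at mutual distance `1`, so they cannot lie in a separable set.
-/

open Filter Topology
open scoped ENNReal

/-- The extended mixing limit set `J_T^mix(x)`: all `y` for which there exists a
sequence `(x_n)` with `x_n → x` and `T^n x_n → y`. -/
noncomputable def Jmix {X : Type*} [SeminormedAddCommGroup X] [NormedSpace ℂ X]
    (T : X →L[ℂ] X) (x : X) : Set X :=
  {y | ∃ u : ℕ → X, Tendsto u atTop (𝓝 x) ∧ Tendsto (fun n => (T ^ n) (u n)) atTop (𝓝 y)}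

section Jmix

variable {X : Type*} [SeminormedAddCommGroup X] [NormedSpace ℂ X] {T : X →L[ℂ] X}

theorem add_mem_Jmix {x x' y y' : X} (hy : y ∈ Jmix T x) (hy' : y' ∈ Jmix T x') :
    y + y' ∈ Jmix T (x + x') := by
  obtain ⟨u, hu, hTu⟩ := hy
  obtain ⟨u', hu', hTu'⟩ := hy'
  exact ⟨u + u', hu.add hu', by simpa only [Pi.add_apply, map_add] using hTu.add hTu'⟩

theorem zero_mem_Jmix_of_tendsto {x : X} (hx : Tendsto (fun n => (T ^ n) x) atTop (𝓝 0)) :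
    0 ∈ Jmix T x :=
  ⟨fun _ => x, tendsto_const_nhds, hx⟩

theorem tendsto_pow_apply_of_apply_eq_zero {x : X} (hx : T x = 0) :
    Tendsto (fun n => (T ^ n) x) atTop (𝓝 0) :=
  tendsto_const_nhds.congr' <| eventually_atTop.mpr ⟨1, fun n hn => by
    obtain ⟨k, rfl⟩ := Nat.exists_eq_add_of_le' hn
    simp only [pow_succ, mul_apply_eq_comp, hx, map_zero]⟩

theorem Jmix_zero_eq_univ_of_mul_eq_one {S : X →L[ℂ] X} (hTS : T * S = 1) (hS : ‖S‖ < 1) :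
    Jmix T 0 = Set.univ := by
  refine Set.eq_univ_of_forall fun y => ⟨fun n => (S ^ n) y, ?_, ?_⟩
  · exact ((ContinuousLinearMap.apply ℂ X y).continuous.tendsto 0).comp
      (tendsto_pow_atTop_nhds_zero_of_norm_lt_one hS)
  · simp_rw [← mul_apply_eq_comp, pow_mul_pow_eq_one _ hTS]
    exact tendsto_const_nhds

theorem Jmix_eq_univ_of_mul_eq_one {S : X →L[ℂ] X} (hTS : T * S = 1) (hS : ‖S‖ < 1) {x : X}
    (hx : Tendsto (fun n => (T ^ n) x) atTop (𝓝 0)) : Jmix T x = Set.univ :=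
  Set.eq_univ_of_forall fun y => by
    have := add_mem_Jmix (Jmix_zero_eq_univ_of_mul_eq_one hTS hS ▸ Set.mem_univ y)
      (zero_mem_Jmix_of_tendsto hx)
    rwa [add_zero, zero_add] at this

end Jmix

theorem not_isSeparable_of_pairwise_le_dist {α ι : Type*} [PseudoMetricSpace α] [Uncountable ι]
    {f : ι → α} {ε : ℝ} (hε : 0 < ε) (hf : Pairwise fun i j => ε ≤ dist (f i) (f j))
    {s : Set α} (hs : Set.range f ⊆ s) : ¬ TopologicalSpace.IsSeparable s := by
  rintro ⟨c, hc, hsc⟩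
  have hnear (i : ι) : ∃ z ∈ c, dist (f i) z < ε / 2 :=
    Metric.mem_closure_iff.mp (hsc (hs ⟨i, rfl⟩)) _ (half_pos hε)
  choose g hgc hg using hnear
  have hinj : Function.Injective g := fun i j hij => by
    by_contra hne
    have := dist_triangle_right (f i) (f j) (g i)
    linarith [hf hne, hg i, hij ▸ hg j]
  have := hc.to_subtype
  exact not_countable (Function.Injective.countable (f := fun i => (⟨g i, hgc i⟩ : c))
    fun i j h => hinj (congrArg Subtype.val h))

namespace lp

variable {𝕜 E R ι κ : Type*} [NontriviallyNormedField 𝕜] [NormedAddCommGroup E] [NormedSpace 𝕜 E]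
  [NormedRing R] [NormOneClass R]

noncomputable def inftyComp (f : ι → κ) : lp (fun _ : κ => E) ∞ →L[𝕜] lp (fun _ : ι => E) ∞ :=
  LinearMap.mkContinuous
    { toFun := fun x => ⟨x ∘ f, memℓp_infty ⟨‖x‖, by
        rintro _ ⟨i, rfl⟩
        exact norm_apply_le_norm ENNReal.top_ne_zero x (f i)⟩⟩
      map_add' := fun _ _ => rfl
      map_smul' := fun _ _ => rfl }
    1
    (fun x => by
      rw [one_mul]
      exact norm_le_of_forall_le (norm_nonneg x) fun i =>
        norm_apply_le_norm ENNReal.top_ne_zero x (f i))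

@[simp]
theorem inftyComp_apply (f : ι → κ) (x : lp (fun _ : κ => E) ∞) (i : ι) :
    inftyComp (𝕜 := 𝕜) f x i = x (f i) := rfl

theorem norm_extend_le (f : ι → κ) (x : lp (fun _ : ι => E) ∞) (k : κ) :
    ‖Function.extend f x 0 k‖ ≤ ‖x‖ := by
  classical
  rw [Function.extend_def]
  split_ifs
  · exact norm_apply_le_norm ENNReal.top_ne_zero x _
  · simp

noncomputable def inftyExtend (f : ι → κ) : lp (fun _ : ι => E) ∞ →L[𝕜] lp (fun _ : κ => E) ∞ :=
  LinearMap.mkContinuous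
    { toFun := fun x => ⟨Function.extend f x 0, memℓp_infty ⟨‖x‖, by
        rintro _ ⟨k, rfl⟩
        exact norm_extend_le f x k⟩⟩
      map_add' := fun x y => by
        ext1
        have := Function.extend_add f x y 0 0
        rwa [add_zero] at this
      map_smul' := fun c x => by
        ext1
        simpa using Function.extend_smul c f x 0 }
    1
    (fun x => by
      rw [one_mul]
      exact norm_le_of_forall_le (norm_nonneg x) (norm_extend_le f x))

theorem inftyExtend_apply_self {f : ι → κ} (hf : Function.Injective f)
    (x : lp (fun _ : ι => E) ∞) (i : ι) : inftyExtend (𝕜 := 𝕜) f x (f i) = x i :=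
  hf.extend_apply x 0 i

theorem norm_inftyExtend_le (f : ι → κ) :
    ‖(inftyExtend f : lp (fun _ : ι => E) ∞ →L[𝕜] _)‖ ≤ 1 :=
  LinearMap.mkContinuous_norm_le _ zero_le_one _

noncomputable def inftyIndicator (s : Set ι) : lp (fun _ : ι => R) ∞ :=
  ⟨s.indicator 1, memℓp_infty ⟨1, by
    rintro _ ⟨i, rfl⟩
    exact (norm_indicator_le_norm_self _ i).trans_eq norm_one⟩⟩

theorem one_le_dist_inftyIndicator {s t : Set ι} (hst : s ≠ t) :
    1 ≤ dist (inftyIndicator (R := R) s) (inftyIndicator t) := by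
  obtain ⟨i, hi⟩ : ∃ i, ¬ (i ∈ s ↔ i ∈ t) := by
    by_contra! h
    exact hst (Set.ext h)
  calc (1 : ℝ) = ‖s.indicator (1 : ι → R) i - t.indicator 1 i‖ := by
        by_cases hs : i ∈ s <;> by_cases ht : i ∈ t <;> simp_all
    _ ≤ dist (inftyIndicator (R := R) s) (inftyIndicator t) := by
      rw [dist_eq_norm]
      exact norm_apply_le_norm ENNReal.top_ne_zero
        (inftyIndicator (R := R) s - inftyIndicator t) i

end lp

instance : Uncountable (Set ℕ) :=
  ⟨fun ⟨f, hf⟩ => Function.cantor_injective f hf⟩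

local notation "ℓ∞" => lp (fun _ : ℕ => ℂ) ∞

noncomputable def oddShift : ℓ∞ →L[ℂ] ℓ∞ :=
  (2 : ℂ) • lp.inftyComp fun m => 2 * m + 1

noncomputable def oddShiftRightInv : ℓ∞ →L[ℂ] ℓ∞ :=
  (2⁻¹ : ℂ) • lp.inftyExtend fun m => 2 * m + 1

theorem oddShift_mul_oddShiftRightInv : oddShift * oddShiftRightInv = 1 := by
  have hinj : Function.Injective fun m : ℕ => 2 * m + 1 := fun m n h => by simpa using h
  ext x m
  simp only [oddShift, oddShiftRightInv]
  simpa using lp.inftyExtend_apply_self hinj x m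

theorem norm_oddShiftRightInv_lt_one : ‖oddShiftRightInv‖ < 1 := by
  have hE := lp.norm_inftyExtend_le (𝕜 := ℂ) (E := ℂ) fun m : ℕ => 2 * m + 1
  calc ‖oddShiftRightInv‖
      = 2⁻¹ * ‖lp.inftyExtend (𝕜 := ℂ) (E := ℂ) fun m : ℕ => 2 * m + 1‖ := by
        rw [oddShiftRightInv, norm_smul]
        norm_num
    _ < 1 := by linarith

theorem Jmix_oddShift_eq_univ {x : ℓ∞} (hx : ∀ m, x (2 * m + 1) = 0) :
    Jmix oddShift x = Set.univ := by
  have hTx : oddShift x = 0 := by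
    ext m
    simp [oddShift, hx]
  exact Jmix_eq_univ_of_mul_eq_one oddShift_mul_oddShiftRightInv norm_oddShiftRightInv_lt_one
    (tendsto_pow_apply_of_apply_eq_zero hTx)

noncomputable def evenIndicator (s : Set ℕ) : ℓ∞ :=
  lp.inftyIndicator ((2 * ·) '' s)

theorem evenIndicator_apply_odd (s : Set ℕ) (m : ℕ) : evenIndicator s (2 * m + 1) = 0 := by
  simp only [evenIndicator, lp.inftyIndicator]
  exact Set.indicator_of_notMem (by rintro ⟨k, -, hk : 2 * k = 2 * m + 1⟩; omega) _

theorem evenIndicator_univ_ne_zero : evenIndicator Set.univ ≠ 0 := by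
  intro h
  have h0 : evenIndicator Set.univ 0 = 1 := by
    simp [evenIndicator, lp.inftyIndicator]
  simp [h] at h0

/-- There exists a `J^mix`-class operator `T` on `l^∞(ℕ)` such that the set
`A_T^mix = {x : J_T^mix(x) = l^∞(ℕ)}` is non-separable. -/
theorem stmt18 :
    ∃ T : lp (fun _ : ℕ => ℂ) ∞ →L[ℂ] lp (fun _ : ℕ => ℂ) ∞,
      (∃ x : lp (fun _ : ℕ => ℂ) ∞, x ≠ 0 ∧ Jmix T x = Set.univ) ∧
      ¬ TopologicalSpace.IsSeparable
          {x : lp (fun _ : ℕ => ℂ) ∞ | Jmix T x = Set.univ} := by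
  have hJ (s : Set ℕ) : Jmix oddShift (evenIndicator s) = Set.univ :=
    Jmix_oddShift_eq_univ (evenIndicator_apply_odd s)
  refine ⟨oddShift, ⟨evenIndicator Set.univ, evenIndicator_univ_ne_zero, hJ _⟩, ?_⟩
  have hsep : Pairwise fun s t => 1 ≤ dist (evenIndicator s) (evenIndicator t) :=
    fun s t hst => lp.one_le_dist_inftyIndicator <|
      (Set.image_injective.mpr fun m n h => by simpa using h).ne hst
  exact not_isSeparable_of_pairwise_le_dist one_pos hsep (Set.range_subset_iff.mpr hJ)
end
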